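/- Let S be a convex cost process and D a convex portfolio constraint process, and let C be the set of claim processes superhedgeable with zero cost. Assume that for each t = 0,…,T, almost surely D_t^∞(ω) ∩ {x ∈ ℝ^J | S_t^∞(x,ω) ≤ 0} = {0}, where D_t^∞(ω) := ⋂_{α>0} α·D_t(ω) is the recession cone of D_t(ω) and S_t^∞(x,ω) := sup_{α>0} α·S_t(x/α, ω) is the recession function of S_t(·,ω). Then C is closed in probability. -/

import Mathlib

open MeasureTheory Filter
open scoped Pointwise

noncomputable section

/-- The portfolio held before time `t`, with the convention `x₋₁ = 0`. -/
def prevP {Ω : Type*} {T : ℕ} {E : Type*} [Zero E]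
    (x : Fin (T + 1) → Ω → E) (t : Fin (T + 1)) : Ω → E :=
  if t.1 = 0 then 0 else x ⟨t.1 - 1, lt_of_le_of_lt (Nat.sub_le _ _) t.isLt⟩

/-- The recession cone of a set in a real vector space. -/
def rcone {V : Type*} [AddCommMonoid V] [SMul ℝ V] (A : Set V) : Set V :=
  {y | ∀ a ∈ A, ∀ α : ℝ, 0 < α → a + α • y ∈ A}

variable {Ω : Type*} {m0 : MeasurableSpace Ω} {T : ℕ} {J : Type*} [Fintype J]

/-- A convex cost process: `S t · ω` is convex, lsc, vanishes at `0`, never `-∞`, and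
`S t` is `B(ℝ^J) ⊗ ℱ t`-measurable. -/
structure CostProcess (ℱ : Filtration (Fin (T + 1)) m0) (J : Type*) [Fintype J] where
  S : Fin (T + 1) → (J → ℝ) → Ω → EReal
  ne_bot : ∀ t x ω, S t x ω ≠ ⊥
  convex : ∀ t ω (x y : J → ℝ) (a b : ℝ), 0 ≤ a → 0 ≤ b → a + b = 1 →
    S t (a • x + b • y) ω ≤ (a : EReal) * S t x ω + (b : EReal) * S t y ω
  lsc : ∀ t ω, LowerSemicontinuous fun x => S t x ω
  zero : ∀ t ω, S t 0 ω = 0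
  meas : ∀ t, Measurable[(inferInstance : MeasurableSpace (J → ℝ)).prod (ℱ t)]
    fun p : (J → ℝ) × Ω => S t p.1 p.2

/-- A convex portfolio constraint process: each `D t ω` is closed, convex, contains `0`,
and `ω ↦ D t ω` is `ℱ t`-measurable. -/
structure ConstraintProcess (ℱ : Filtration (Fin (T + 1)) m0) (J : Type*) [Fintype J] where
  D : Fin (T + 1) → Ω → Set (J → ℝ)
  closed : ∀ t ω, IsClosed (D t ω)
  convex : ∀ t ω, Convex ℝ (D t ω)
  zero_mem : ∀ t ω, (0 : J → ℝ) ∈ D t ω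
  meas : ∀ t (U : Set (J → ℝ)), IsOpen U →
    MeasurableSet[ℱ t] {ω | (D t ω ∩ U).Nonempty}

/-- The set `M` of adapted claim processes. -/
def ClaimM (ℱ : Filtration (Fin (T + 1)) m0) : Set (Fin (T + 1) → Ω → ℝ) :=
  {c | Adapted ℱ c}

/-- The set `M₋` of almost surely nonpositive claim processes. -/
def Mminus (P : Measure Ω) (ℱ : Filtration (Fin (T + 1)) m0) :
    Set (Fin (T + 1) → Ω → ℝ) :=
  {c | c ∈ ClaimM ℱ ∧ ∀ t, ∀ᵐ ω ∂P, c t ω ≤ 0}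

/-- The set `C` of claim processes superhedgeable with zero cost. -/
def Cset (P : Measure Ω) (ℱ : Filtration (Fin (T + 1)) m0)
    (S : CostProcess ℱ J) (D : ConstraintProcess ℱ J) :
    Set (Fin (T + 1) → Ω → ℝ) :=
  {c | c ∈ ClaimM ℱ ∧ ∃ x : Fin (T + 1) → Ω → (J → ℝ), Adapted ℱ x ∧
    x (Fin.last T) = 0 ∧
    ∀ᵐ ω ∂P, ∀ t, x t ω ∈ D.D t ω ∧
      S.S t (x t ω - prevP x t ω) ω + (c t ω : EReal) ≤ 0}

/-- The set `M¹` of integrable claim processes. -/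
def M1 (P : Measure Ω) (ℱ : Filtration (Fin (T + 1)) m0) :
    Set (Fin (T + 1) → Ω → ℝ) :=
  {c | c ∈ ClaimM ℱ ∧ ∀ t, Integrable (c t) P}

/-- The set `M^∞` of essentially bounded claim processes. -/
def Minf (P : Measure Ω) (ℱ : Filtration (Fin (T + 1)) m0) :
    Set (Fin (T + 1) → Ω → ℝ) :=
  {c | c ∈ ClaimM ℱ ∧ ∀ t, MemLp (c t) ⊤ P}

/-- The bilinear pairing `E ∑ₜ cₜ yₜ`. -/
def pairing (P : Measure Ω) (c y : Fin (T + 1) → Ω → ℝ) : ℝ :=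
  ∫ ω, ∑ t, c t ω * y t ω ∂P

/-- The support function `σ_{C¹}(y) = sup_{c ∈ C¹} E ∑ₜ cₜ yₜ` of a set of integrable
claim processes. -/
def sigmaSup (P : Measure Ω) (A : Set (Fin (T + 1) → Ω → ℝ))
    (y : Fin (T + 1) → Ω → ℝ) : EReal :=
  sSup ((fun c => ((pairing P c y : ℝ) : EReal)) '' A)

/-- `A` is closed in probability (within the space `M` of adapted claim processes). -/
def ClosedInProb (P : Measure Ω) (ℱ : Filtration (Fin (T + 1)) m0)
    (A : Set (Fin (T + 1) → Ω → ℝ)) : Prop :=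
  ∀ cs : ℕ → Fin (T + 1) → Ω → ℝ, (∀ n, cs n ∈ A) →
    ∀ c ∈ ClaimM ℱ, (∀ t, TendstoInMeasure P (fun n => cs n t) atTop (c t)) → c ∈ A


/-!
Pass to a subsequence of claims converging almost surely. Along it the hedging strategies are
almost surely bounded, date by date: otherwise the normalised positions `xₜⁿ / ‖xₜⁿ‖` would
accumulate at a unit vector in the recession cone of `Dₜ` on which the recession function of `Sₜ`
is nonpositive, which the hypothesis forbids (the previous position and the claim stay bounded,
so they disappear under the normalisation). Bounded sequences have convergent subsequences, and
these can be selected by random indices that are `ℱₜ`-measurable, refining the subsequence one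
date at a time; the limit strategy is then adapted. Closedness of `Dₜ` and lower semicontinuity of
`Sₜ` carry the constraints to the limit.
-/

open Set Bornology
open scoped Topology

section RandomSubsequence

variable {G : MeasurableSpace Ω}

theorem measurable_seq_apply {β : Type*} [MeasurableSpace β] {f : ℕ → Ω → β}
    (hf : ∀ n, Measurable[G] (f n)) {g : Ω → ℕ} (hg : Measurable[G] g) :
    Measurable[G] fun ω => f (g ω) ω :=
  (measurable_from_prod_countable_left (f := fun p : Ω × ℕ => f p.2 p.1) hf).comp
    (measurable_id.prodMk hg)

theorem exists_measurable_strictMono_mem (A : ℕ → ℕ → Set Ω)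
    (hA : ∀ k n, MeasurableSet[G] (A k n)) (hfreq : ∀ k ω, ∃ᶠ n in atTop, ω ∈ A k n) :
    ∃ σ : ℕ → Ω → ℕ, (∀ k, Measurable[G] (σ k)) ∧ (∀ ω, StrictMono (σ · ω)) ∧
      ∀ k ω, ω ∈ A k (σ k ω) := by
  classical
  have hnext : ∀ k (prev : Ω → ℕ) ω, ∃ n, prev ω < n ∧ ω ∈ A k n :=
    fun k prev ω => frequently_atTop'.1 (hfreq k ω) (prev ω)
  let next : ℕ → (Ω → ℕ) → Ω → ℕ := fun k prev ω => Nat.find (hnext k prev ω)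
  have next_spec : ∀ k prev ω, prev ω < next k prev ω ∧ ω ∈ A k (next k prev ω) :=
    fun k prev ω => Nat.find_spec (hnext k prev ω)
  have next_meas : ∀ k prev, Measurable[G] prev → Measurable[G] (next k prev) := by
    intro k prev hprev
    refine measurable_find _ fun n => ?_
    exact (hprev measurableSet_Iio).inter (hA k n)
  let σ : ℕ → Ω → ℕ := fun k => Nat.rec (next 0 0) (fun k prev => next (k + 1) prev) k
  refine ⟨σ, fun k => ?_, fun ω => strictMono_nat_of_lt_succ fun k => ?_, fun k ω => ?_⟩
  · induction k with
    | zero => exact next_meas 0 0 measurable_const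
    | succ k ih => exact next_meas (k + 1) _ ih
  · exact (next_spec (k + 1) (σ k) ω).1
  · cases k with
    | zero => exact (next_spec 0 0 ω).2
    | succ k => exact (next_spec (k + 1) (σ k) ω).2

theorem exists_measurable_subseq_tendsto_of_mapClusterPt {E : Type*} [PseudoMetricSpace E]
    [MeasurableSpace E] [OpensMeasurableSpace E] [SecondCountableTopology E]
    {f : ℕ → Ω → E} (hf : ∀ n, Measurable[G] (f n)) {ℓ : Ω → E} (hℓ : Measurable[G] ℓ) :
    ∃ σ : ℕ → Ω → ℕ, (∀ k, Measurable[G] (σ k)) ∧ (∀ ω, StrictMono (σ · ω)) ∧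
      ∀ ω, MapClusterPt (ℓ ω) atTop (f · ω) →
        Tendsto (fun k => f (σ k ω) ω) atTop (𝓝 (ℓ ω)) := by
  let near : ℕ → ℕ → Set Ω := fun k n => {ω | dist (f n ω) (ℓ ω) < 1 / (k + 1 : ℝ)}
  have near_meas : ∀ k n, MeasurableSet[G] (near k n) :=
    fun k n => measurableSet_lt ((hf n).dist hℓ) measurable_const
  let B : Set Ω := {ω | MapClusterPt (ℓ ω) atTop (f · ω)}
  have mem_B : ∀ ω, ω ∈ B ↔ ∀ k, ∃ᶠ n in atTop, ω ∈ near k n := fun ω =>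
    (Metric.nhds_basis_ball_inv_nat_succ.mapClusterPt_iff_frequently).trans <| by
      simp [near, Metric.mem_ball]
  have hB : MeasurableSet[G] B := by
    have : B = ⋂ k, limsup (near k) atTop := by
      ext ω; simp only [mem_B, mem_iInter, mem_limsup_iff_frequently_mem]
    rw [this]
    exact .iInter fun k => .measurableSet_limsup (near_meas k)
  obtain ⟨σ, hσ, hσmono, hσmem⟩ := exists_measurable_strictMono_mem
    (fun k n => near k n ∪ Bᶜ) (fun k n => (near_meas k n).union hB.compl) fun k ω => by
      by_cases hω : ω ∈ B
      · exact ((mem_B ω).1 hω k).mono fun n hn => Or.inl hn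
      · exact .of_forall fun n => Or.inr hω
  refine ⟨σ, hσ, hσmono, fun ω hω => ?_⟩
  have hnear : ∀ k, dist (f (σ k ω) ω) (ℓ ω) < 1 / (k + 1 : ℝ) := fun k =>
    (hσmem k ω).resolve_right (not_not.2 hω)
  exact tendsto_iff_dist_tendsto_zero.2 <| squeeze_zero (fun _ => dist_nonneg)
    (fun k => (hnear k).le) tendsto_one_div_add_atTop_nhds_zero_nat

theorem exists_measurable_subseq_tendsto_real {f : ℕ → Ω → ℝ} (hf : ∀ n, Measurable[G] (f n)) :
    ∃ σ : ℕ → Ω → ℕ, (∀ k, Measurable[G] (σ k)) ∧ (∀ ω, StrictMono (σ · ω)) ∧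
      ∀ ω, IsBounded (range (f · ω)) → ∃ L, Tendsto (fun k => f (σ k ω) ω) atTop (𝓝 L) := by
  obtain ⟨σ, hσ, hσmono, hσlim⟩ :=
    exists_measurable_subseq_tendsto_of_mapClusterPt hf (Measurable.liminf hf)
  refine ⟨σ, hσ, hσmono, fun ω hω => ⟨_, hσlim ω ?_⟩⟩
  exact MapClusterPt.liminf hω.bddAbove.isBoundedUnder_of_range.isCoboundedUnder_ge
    hω.bddBelow.isBoundedUnder_of_range

theorem exists_measurable_subseq_tendsto_pi {ι : Type*} [Fintype ι] {f : ℕ → Ω → ι → ℝ}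
    (hf : ∀ n, Measurable[G] (f n)) :
    ∃ σ : ℕ → Ω → ℕ, (∀ k, Measurable[G] (σ k)) ∧ (∀ ω, StrictMono (σ · ω)) ∧
      ∃ y : Ω → ι → ℝ, Measurable[G] y ∧
        ∀ ω, IsBounded (range (f · ω)) → Tendsto (fun k => f (σ k ω) ω) atTop (𝓝 (y ω)) := by
  classical
  suffices h : ∀ s : Finset ι, ∃ σ : ℕ → Ω → ℕ, (∀ k, Measurable[G] (σ k)) ∧
      (∀ ω, StrictMono (σ · ω)) ∧ ∀ ω, IsBounded (range (f · ω)) →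
        ∀ j ∈ s, ∃ L, Tendsto (fun k => f (σ k ω) ω j) atTop (𝓝 L) by
    obtain ⟨σ, hσ, hσmono, hσlim⟩ := h Finset.univ
    refine ⟨σ, hσ, hσmono, fun ω => limUnder atTop fun k => f (σ k ω) ω,
      (StronglyMeasurable.limUnder fun k =>
        (measurable_seq_apply hf (hσ k)).stronglyMeasurable).measurable, fun ω hω => ?_⟩
    choose L hL using fun j => hσlim ω hω j (Finset.mem_univ j)
    exact tendsto_nhds_limUnder ⟨L, tendsto_pi_nhds.2 hL⟩
  intro s
  induction s using Finset.induction_on with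
  | empty => exact ⟨fun k _ => k, fun k => measurable_const, fun ω => strictMono_id, by simp⟩
  | insert a s _ ih =>
    obtain ⟨σ, hσ, hσmono, hσlim⟩ := ih
    obtain ⟨ρ, hρ, hρmono, hρlim⟩ := exists_measurable_subseq_tendsto_real
      (f := fun n ω => f (σ n ω) ω a)
      fun n => (measurable_pi_apply a).comp (measurable_seq_apply hf (hσ n))
    refine ⟨fun k ω => σ (ρ k ω) ω, fun k => measurable_seq_apply hσ (hρ k),
      fun ω => (hσmono ω).comp (hρmono ω), fun ω hω j hj => ?_⟩
    rcases Finset.mem_insert.1 hj with rfl | hj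
    · refine hρlim ω (((LipschitzWith.eval j).isBounded_image hω).subset ?_)
      rintro _ ⟨n, rfl⟩
      exact ⟨f (σ n ω) ω, ⟨σ n ω, rfl⟩, rfl⟩
    · obtain ⟨L, hL⟩ := hσlim ω hω j hj
      exact ⟨L, hL.comp (hρmono ω).tendsto_atTop⟩

end RandomSubsequence

/-- `ConvexOn` needs a module as codomain, which `EReal` is not. -/
def EConvex {E : Type*} [AddCommGroup E] [Module ℝ E] (f : E → EReal) : Prop :=
  ∀ (x y : E) (a b : ℝ), 0 ≤ a → 0 ≤ b → a + b = 1 →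
    f (a • x + b • y) ≤ (a : EReal) * f x + (b : EReal) * f y

theorem EReal.add_coe_le_zero_iff {x : EReal} {a : ℝ} : x + a ≤ 0 ↔ x ≤ ((-a : ℝ) : EReal) := by
  rw [← EReal.le_sub_iff_add_le (.inl (EReal.coe_ne_bot a)) (.inl (EReal.coe_ne_top a)),
    zero_sub, EReal.coe_neg]

theorem LowerSemicontinuous.add_coe_le_zero_of_tendsto {X ι : Type*} [TopologicalSpace X]
    {l : Filter ι} [l.NeBot] {f : X → EReal} (hf : LowerSemicontinuous f) {v : ι → X} {x : X}
    {a : ι → ℝ} {b : ℝ} (hv : Tendsto v l (𝓝 x)) (ha : Tendsto a l (𝓝 b))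
    (h : ∀ i, f (v i) + a i ≤ 0) : f x + b ≤ 0 :=
  EReal.add_coe_le_zero_iff.2 <| hf.isClosed_epigraph.mem_of_tendsto
    (hv.prodMk_nhds (EReal.tendsto_coe.2 ha.neg))
    (.of_forall fun i => EReal.add_coe_le_zero_iff.1 (h i))

section Recession

variable {E : Type*} [NormedAddCommGroup E] [NormedSpace ℝ E]
  {ι : Type*} {l : Filter ι} {R : ι → ℝ} {y : E}

theorem EConvex.le_mul_of_map_zero {f : E → EReal} (hf : EConvex f) (h0 : f 0 = 0) {a : ℝ}
    (ha₀ : 0 ≤ a) (ha₁ : a ≤ 1) (x : E) : f (a • x) ≤ a * f x := by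
  simpa [h0] using hf x 0 a (1 - a) ha₀ (by linarith) (by ring)

theorem Filter.Tendsto.inv_const_mul_smul {v : ι → E}
    (hy : Tendsto (fun i => (R i)⁻¹ • v i) l (𝓝 y)) (α : ℝ) : Tendsto (fun i => (α * R i)⁻¹ • v i) l (𝓝 (α⁻¹ • y)) := by
  simpa only [mul_inv, mul_smul] using hy.const_smul α⁻¹

variable [l.NeBot]

theorem Convex.mem_of_tendsto_inv_smul {D : Set E} (hDc : IsClosed D) (hDconv : Convex ℝ D)
    (hD0 : (0 : E) ∈ D) {z : ι → E} (hz : ∀ i, z i ∈ D) (hR : Tendsto R l atTop)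
    (hy : Tendsto (fun i => (R i)⁻¹ • z i) l (𝓝 y)) : y ∈ D :=
  hDc.mem_of_tendsto hy <| (hR.eventually_ge_atTop 1).mono fun i hi =>
    hDconv.smul_mem_of_zero_mem hD0 (hz i) ⟨by positivity, inv_le_one_of_one_le₀ hi⟩

theorem Convex.mem_iInter_smul_of_tendsto_inv_smul {D : Set E} (hDc : IsClosed D)
    (hDconv : Convex ℝ D) (hD0 : (0 : E) ∈ D) {z : ι → E} (hz : ∀ i, z i ∈ D)
    (hR : Tendsto R l atTop) (hy : Tendsto (fun i => (R i)⁻¹ • z i) l (𝓝 y)) :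
    y ∈ ⋂ (α : ℝ) (_ : 0 < α), α • D := by
  refine mem_iInter₂.2 fun α hα => ?_
  rw [mem_smul_set_iff_inv_smul_mem₀ hα.ne']
  exact hDconv.mem_of_tendsto_inv_smul hDc hD0 hz (hR.const_mul_atTop hα)
    (hy.inv_const_mul_smul α)

theorem EConvex.le_zero_of_tendsto_inv_smul {f : E → EReal} (hf : EConvex f)
    (hlsc : LowerSemicontinuous f) (h0 : f 0 = 0) {v : ι → E} {M : ℝ} (hv : ∀ i, f (v i) ≤ M)
    (hR : Tendsto R l atTop) (hy : Tendsto (fun i => (R i)⁻¹ • v i) l (𝓝 y)) : f y ≤ 0 := by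
  have hbound : ∀ᶠ i in l, f ((R i)⁻¹ • v i) ≤ (((R i)⁻¹ * M : ℝ) : EReal) := by
    filter_upwards [hR.eventually_ge_atTop 1] with i hi
    have hR₀ : 0 ≤ (R i)⁻¹ := by positivity
    calc f ((R i)⁻¹ • v i) ≤ ((R i)⁻¹ : ℝ) * f (v i) :=
          hf.le_mul_of_map_zero h0 hR₀ (inv_le_one_of_one_le₀ hi) _
      _ ≤ ((R i)⁻¹ : ℝ) * (M : EReal) := mul_le_mul_of_nonneg_left (hv i) (by exact_mod_cast hR₀)
      _ = (((R i)⁻¹ * M : ℝ) : EReal) := (EReal.coe_mul _ _).symm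
  have hlim : Tendsto (fun i => (((R i)⁻¹ * M : ℝ) : EReal)) l (𝓝 ((0 : ℝ) : EReal)) :=
    EReal.tendsto_coe.2 (by simpa using hR.inv_tendsto_atTop.mul_const M)
  exact hlsc.isClosed_epigraph.mem_of_tendsto (hy.prodMk_nhds hlim) hbound

theorem EConvex.iSup_mul_le_zero_of_tendsto_inv_smul {f : E → EReal} (hf : EConvex f)
    (hlsc : LowerSemicontinuous f) (h0 : f 0 = 0) {v : ι → E} {M : ℝ} (hv : ∀ i, f (v i) ≤ M)
    (hR : Tendsto R l atTop) (hy : Tendsto (fun i => (R i)⁻¹ • v i) l (𝓝 y)) :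
    ⨆ (α : ℝ) (_ : 0 < α), (α : EReal) * f (α⁻¹ • y) ≤ 0 := by
  refine iSup₂_le fun α hα => ?_
  have hle : f (α⁻¹ • y) ≤ 0 := hf.le_zero_of_tendsto_inv_smul hlsc h0 hv
    (hR.const_mul_atTop hα) (hy.inv_const_mul_smul α)
  simpa using mul_le_mul_of_nonneg_left hle (by exact_mod_cast hα.le : (0 : EReal) ≤ α)

theorem exists_tendsto_inv_norm_smul_of_not_isBounded [ProperSpace E] {u : ℕ → E}
    (hu : ¬IsBounded (range u)) : ∃ φ : ℕ → ℕ, Tendsto (fun k => ‖u (φ k)‖) atTop atTop ∧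
      ∃ y : E, ‖y‖ = 1 ∧ Tendsto (fun k => ‖u (φ k)‖⁻¹ • u (φ k)) atTop (𝓝 y) := by
  have hlarge : ∀ k : ℕ, ∃ n, (k : ℝ) < ‖u n‖ := by
    by_contra! h
    obtain ⟨k, hk⟩ := h
    exact hu (isBounded_iff_forall_norm_le.2 ⟨k, by rintro _ ⟨n, rfl⟩; exact hk n⟩)
  choose φ hφ using hlarge
  have hsphere : ∀ k, ‖u (φ k)‖⁻¹ • u (φ k) ∈ Metric.sphere (0 : E) 1 := fun k => by
    have : ‖u (φ k)‖ ≠ 0 := ((Nat.cast_nonneg k).trans_lt (hφ k)).ne'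
    rw [mem_sphere_zero_iff_norm, norm_smul, norm_inv, norm_norm, inv_mul_cancel₀ this]
  obtain ⟨y, hy, ψ, hψ, hlim⟩ := (isCompact_sphere (0 : E) 1).tendsto_subseq hsphere
  exact ⟨φ ∘ ψ, (tendsto_atTop_mono (fun k => (hφ k).le) tendsto_natCast_atTop_atTop).comp
    hψ.tendsto_atTop, y, mem_sphere_zero_iff_norm.1 hy, hlim⟩

theorem isBounded_range_of_recession [ProperSpace E] {D : Set E} (hDc : IsClosed D)
    (hDconv : Convex ℝ D) (hD0 : (0 : E) ∈ D) {f : E → EReal} (hf : EConvex f)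
    (hlsc : LowerSemicontinuous f) (h0 : f 0 = 0)
    (hrec : (⋂ (α : ℝ) (_ : 0 < α), α • D) ∩
      {x : E | (⨆ (α : ℝ) (_ : 0 < α), (α : EReal) * f (α⁻¹ • x)) ≤ 0} = {0})
    {z p : ℕ → E} {d : ℕ → ℝ} (hz : ∀ n, z n ∈ D) (hcost : ∀ n, f (z n - p n) + d n ≤ 0)
    (hp : IsBounded (range p)) (hd : BddBelow (range d)) : IsBounded (range z) := by
  by_contra hunb
  obtain ⟨φ, hR, y, hy₁, hy⟩ := exists_tendsto_inv_norm_smul_of_not_isBounded hunb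
  obtain ⟨m, hm⟩ := hd
  obtain ⟨C, hC⟩ := isBounded_iff_forall_norm_le.1 hp
  have hp₀ : Tendsto (fun k => ‖z (φ k)‖⁻¹ • p (φ k)) atTop (𝓝 0) :=
    hR.inv_tendsto_atTop.zero_smul_isBoundedUnder_le
      (isBoundedUnder_of ⟨C, fun k => hC _ ⟨φ k, rfl⟩⟩)
  have hv : Tendsto (fun k => ‖z (φ k)‖⁻¹ • (z (φ k) - p (φ k))) atTop (𝓝 y) := by
    simpa only [smul_sub, sub_zero] using hy.sub hp₀
  have hcost' : ∀ k, f (z (φ k) - p (φ k)) ≤ ((-m : ℝ) : EReal) := fun k =>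
    (EReal.add_coe_le_zero_iff.1 (hcost _)).trans
      (EReal.coe_le_coe_iff.2 (neg_le_neg (hm ⟨φ k, rfl⟩)))
  have hmem : y ∈ (⋂ (α : ℝ) (_ : 0 < α), α • D) ∩
      {x : E | (⨆ (α : ℝ) (_ : 0 < α), (α : EReal) * f (α⁻¹ • x)) ≤ 0} :=
    ⟨hDconv.mem_iInter_smul_of_tendsto_inv_smul hDc hD0 (fun k => hz (φ k)) hR hy,
      hf.iSup_mul_le_zero_of_tendsto_inv_smul hlsc h0 hcost' hR hv⟩
  rw [hrec, mem_singleton_iff] at hmem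
  simp [hmem] at hy₁

end Recession

theorem MeasureTheory.TendstoInMeasure.exists_seq_tendsto_ae_forall {ι : Type*} [Fintype ι]
    {P : Measure Ω} {f : ℕ → ι → Ω → ℝ} {g : ι → Ω → ℝ}
    (hfg : ∀ i, TendstoInMeasure P (fun n => f n i) atTop (g i)) :
    ∃ ns : ℕ → ℕ, StrictMono ns ∧
      ∀ᵐ ω ∂P, ∀ i, Tendsto (fun k => f (ns k) i ω) atTop (𝓝 (g i ω)) := by
  classical
  suffices h : ∀ s : Finset ι, ∃ ns : ℕ → ℕ, StrictMono ns ∧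
      ∀ i ∈ s, ∀ᵐ ω ∂P, Tendsto (fun k => f (ns k) i ω) atTop (𝓝 (g i ω)) by
    obtain ⟨ns, hns, hlim⟩ := h Finset.univ
    exact ⟨ns, hns, ae_all_iff.2 fun i => hlim i (Finset.mem_univ i)⟩
  intro s
  induction s using Finset.induction_on with
  | empty => exact ⟨id, strictMono_id, by simp⟩
  | insert a s _ ih =>
    obtain ⟨ns, hns, hlim⟩ := ih
    have hsub : TendstoInMeasure P (fun n => f (ns n) a) atTop (g a) :=
      fun ε hε => (hfg a ε hε).comp hns.tendsto_atTop
    obtain ⟨ms, hms, hlim_a⟩ := hsub.exists_seq_tendsto_ae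
    refine ⟨ns ∘ ms, hns.comp hms, fun i hi => ?_⟩
    rcases Finset.mem_insert.1 hi with rfl | hi
    · exact hlim_a
    · exact (hlim i hi).mono fun ω hω => hω.comp hms.tendsto_atTop

theorem prevP_zero {E : Type*} [Zero E] (x : Fin (T + 1) → Ω → E) : prevP x 0 = 0 :=
  rfl

theorem prevP_succ {E : Type*} [Zero E] (x : Fin (T + 1) → Ω → E) (i : Fin T) :
    prevP x i.succ = x i.castSucc :=
  rfl

theorem tendsto_prevP {E ι : Type*} [TopologicalSpace E] [Zero E] {l : Filter ι}
    {xs : ι → Fin (T + 1) → Ω → E} {x : Fin (T + 1) → Ω → E} {ω : Ω}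
    (h : ∀ t, Tendsto (fun i => xs i t ω) l (𝓝 (x t ω))) (t : Fin (T + 1)) :
    Tendsto (fun i => prevP (xs i) t ω) l (𝓝 (prevP x t ω)) := by
  unfold prevP
  split_ifs
  exacts [tendsto_const_nhds, h _]

theorem exists_adapted_limit_along_random_subseq (ℱ : Filtration (Fin (T + 1)) m0)
    {xs : ℕ → Fin (T + 1) → Ω → J → ℝ} (hxs : ∀ n, Adapted ℱ (xs n)) :
    ∃ τ : ℕ → Ω → ℕ, (∀ ω, StrictMono (τ · ω)) ∧ ∃ x : Fin (T + 1) → Ω → J → ℝ, Adapted ℱ x ∧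
      ∀ ω, (∀ t, IsBounded (range fun n => xs n t ω)) →
        ∀ t, Tendsto (fun k => xs (τ k ω) t ω) atTop (𝓝 (x t ω)) := by
  have refine_at : ∀ t (τ : ℕ → Ω → ℕ), (∀ k, Measurable[ℱ t] (τ k)) →
      ∃ σ : ℕ → Ω → ℕ, (∀ k, Measurable[ℱ t] (σ k)) ∧ (∀ ω, StrictMono (σ · ω)) ∧
        ∃ y : Ω → J → ℝ, Measurable[ℱ t] y ∧ ∀ ω, (∀ r, IsBounded (range fun n => xs n r ω)) →
          Tendsto (fun k => xs (τ (σ k ω) ω) t ω) atTop (𝓝 (y ω)) := by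
    intro t τ hτ
    obtain ⟨σ, hσ, hσmono, y, hy, hylim⟩ := exists_measurable_subseq_tendsto_pi
      (f := fun n ω => xs (τ n ω) t ω) fun n => measurable_seq_apply (fun m => hxs m t) (hτ n)
    refine ⟨σ, hσ, hσmono, y, hy, fun ω hω => hylim ω ((hω t).subset ?_)⟩
    rintro _ ⟨n, rfl⟩
    exact ⟨τ n ω, rfl⟩
  suffices h : ∀ t : Fin (T + 1), ∃ τ : ℕ → Ω → ℕ, (∀ k, Measurable[ℱ t] (τ k)) ∧
      (∀ ω, StrictMono (τ · ω)) ∧ ∀ s ≤ t, ∃ y : Ω → J → ℝ, Measurable[ℱ s] y ∧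
        ∀ ω, (∀ r, IsBounded (range fun n => xs n r ω)) →
          Tendsto (fun k => xs (τ k ω) s ω) atTop (𝓝 (y ω)) by
    obtain ⟨τ, -, hτmono, hlim⟩ := h (Fin.last T)
    choose x hx hxlim using fun s => hlim s (Fin.le_last s)
    exact ⟨τ, hτmono, x, hx, fun ω hω t => hxlim t ω hω⟩
  intro t
  induction t using Fin.induction with
  | zero =>
    obtain ⟨σ, hσ, hσmono, y, hy, hylim⟩ := refine_at 0 (fun k _ => k) fun k => measurable_const
    refine ⟨σ, hσ, hσmono, fun s hs => ?_⟩
    rw [nonpos_iff_eq_zero.1 hs]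
    exact ⟨y, hy, hylim⟩
  | succ i ih =>
    obtain ⟨τ, hτ, hτmono, hlim⟩ := ih
    have hτ' : ∀ k, Measurable[ℱ i.succ] (τ k) := fun k =>
      (hτ k).mono (ℱ.mono (Fin.castSucc_le_succ i)) le_rfl
    obtain ⟨σ, hσ, hσmono, y, hy, hylim⟩ := refine_at i.succ τ hτ'
    refine ⟨fun k ω => τ (σ k ω) ω, fun k => measurable_seq_apply hτ' (hσ k),
      fun ω => (hτmono ω).comp (hσmono ω), fun s hs => ?_⟩
    rcases hs.lt_or_eq with hs | rfl
    · obtain ⟨y', hy', hy'lim⟩ := hlim s (Fin.le_castSucc_iff.2 hs)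
      exact ⟨y', hy', fun ω hω => (hy'lim ω hω).comp (hσmono ω).tendsto_atTop⟩
    · exact ⟨y, hy, hylim⟩

theorem isBounded_range_strategies {ℱ : Filtration (Fin (T + 1)) m0} (S : CostProcess ℱ J)
    (D : ConstraintProcess ℱ J) {ω : Ω} (hrec : ∀ t, (⋂ (α : ℝ) (_ : 0 < α), α • D.D t ω) ∩
      {x : J → ℝ | (⨆ (α : ℝ) (_ : 0 < α), (α : EReal) * S.S t (α⁻¹ • x) ω) ≤ 0} = {0})
    {xs : ℕ → Fin (T + 1) → Ω → J → ℝ} {cs : ℕ → Fin (T + 1) → Ω → ℝ}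
    (hxs : ∀ n t, xs n t ω ∈ D.D t ω ∧ S.S t (xs n t ω - prevP (xs n) t ω) ω + cs n t ω ≤ 0)
    (hcs : ∀ t, BddBelow (range fun n => cs n t ω)) (t : Fin (T + 1)) :
    IsBounded (range fun n => xs n t ω) := by
  have step : ∀ t, IsBounded (range fun n => prevP (xs n) t ω) →
      IsBounded (range fun n => xs n t ω) := fun t hp =>
    isBounded_range_of_recession (D.closed t ω) (D.convex t ω) (D.zero_mem t ω)
      (f := fun v => S.S t v ω) (S.convex t ω)
      (S.lsc t ω) (S.zero t ω) (hrec t) (fun n => (hxs n t).1) (fun n => (hxs n t).2) hp (hcs t)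
  induction t using Fin.induction with
  | zero => exact step 0 (by simp [prevP_zero])
  | succ i ih => exact step i.succ (by simpa only [prevP_succ] using ih)

theorem Cset_closedInProb_general
    (P : Measure Ω) (ℱ : Filtration (Fin (T + 1)) m0)
    (S : CostProcess ℱ J) (D : ConstraintProcess ℱ J)
    (hrec : ∀ t, ∀ᵐ ω ∂P,
      (⋂ (α : ℝ) (_ : 0 < α), α • D.D t ω) ∩
        {x : J → ℝ | (⨆ (α : ℝ) (_ : 0 < α), (α : EReal) * S.S t (α⁻¹ • x) ω) ≤ 0} =
      {0}) :
    ClosedInProb P ℱ (Cset P ℱ S D) := by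
  intro cs hcs c hc hconv
  obtain ⟨ns, -, hcs_ae⟩ := TendstoInMeasure.exists_seq_tendsto_ae_forall hconv
  choose xs hxs hxs_last hxs_ae using fun k => (hcs (ns k)).2
  replace hxs_ae := ae_all_iff.2 hxs_ae
  obtain ⟨τ, hτ, x, hx, hxlim⟩ := exists_adapted_limit_along_random_subseq ℱ hxs
  have hbdd : ∀ᵐ ω ∂P, ∀ t, IsBounded (range fun n => xs n t ω) := by
    filter_upwards [hxs_ae, ae_all_iff.2 hrec, hcs_ae] with ω hxsω hrecω hcω
    exact isBounded_range_strategies S D hrecω hxsω fun t => (hcω t).bddBelow_range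
  let x' := Function.update x (Fin.last T) 0
  refine ⟨hc, x', fun t => ?_, Function.update_self _ _ _, ?_⟩
  · rcases eq_or_ne t (Fin.last T) with rfl | ht
    · simp only [x', Function.update_self]
      exact measurable_const
    · simpa [x', ht] using hx t
  filter_upwards [hxs_ae, hcs_ae, hbdd] with ω hxsω hcω hbω
  have hlim : ∀ t, Tendsto (fun k => xs (τ k ω) t ω) atTop (𝓝 (x' t ω)) := by
    intro t
    rcases eq_or_ne t (Fin.last T) with rfl | ht
    · simp [x', hxs_last]
    · simpa [x', ht] using hxlim ω hbω t
  exact fun t => ⟨(D.closed t ω).mem_of_tendsto (hlim t) (.of_forall fun k => (hxsω _ t).1),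
    (S.lsc t ω).add_coe_le_zero_of_tendsto ((hlim t).sub (tendsto_prevP hlim t))
      ((hcω t).comp (hτ ω).tendsto_atTop) fun k => (hxsω _ t).2⟩

/-- Theorem 10: if almost surely the recession cone of `Dₜ(ω)` meets the
recession-function sublevel set `{x | Sₜ^∞(x,ω) ≤ 0}` only at the origin, then `C` is
closed in probability. -/
theorem Cset_closedInProb
    (P : Measure Ω) [IsProbabilityMeasure P] (ℱ : Filtration (Fin (T + 1)) m0)
    (hcomp : ∀ (t : Fin (T + 1)) (s : Set Ω), P s = 0 → MeasurableSet[ℱ t] s)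
    (S : CostProcess ℱ J) (D : ConstraintProcess ℱ J)
    (hrec : ∀ t, ∀ᵐ ω ∂P,
      (⋂ (α : ℝ) (_ : 0 < α), α • D.D t ω) ∩
        {x : J → ℝ | (⨆ (α : ℝ) (_ : 0 < α), (α : EReal) * S.S t (α⁻¹ • x) ω) ≤ 0} =
      {0}) :
    ClosedInProb P ℱ (Cset P ℱ S D) :=
  Cset_closedInProb_general P ℱ S D hrec
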